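/- arXiv:1506.03797 — 2 statements merged into one kernel-verified Lean document; each statement's English description precedes it below -/
import Mathlib

section
/- Edge distance bound: in the sparse nerve filtration, if p_j is adjacent to p_i (i.e., λ_i ≤ λ_j and b_i(α) ∩ b_j(α) ≠ ∅ for some α ≥ 0), then d(p_i, p_j) ≤ κ·λ_i, where κ = (ε² + 3ε + 2)/ε. -/
/-- Edge distance bound: if `λ_i ≤ λ_j` and `b_i(α) ∩ b_j(α) ≠ ∅` for some
`α ≥ 0`, then `d(p_i, p_j) ≤ κ λ_i` with `κ = (ε² + 3ε + 2)/ε`. -/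
theorem edge_distance_bound
    {X : Type*} [MetricSpace X] {n : ℕ} (p : Fin n → X)
    (lam : Fin n → ℝ) (ε : ℝ) (hε : 0 < ε)
    (r : Fin n → ℝ → ℝ)
    (hr : ∀ i α, r i α = min α (lam i * (1 + ε) / ε))
    (b : Fin n → ℝ → Set X)
    (hb : ∀ i α, b i α = if α ≤ lam i * (1 + ε) ^ 2 / ε
        then Metric.closedBall (p i) (r i α) else ∅)
    (i j : Fin n) (hlami : 0 < lam i) (hij : lam i ≤ lam j)
    (hint : ∃ α : ℝ, 0 ≤ α ∧ (b i α ∩ b j α).Nonempty) :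
    dist (p i) (p j) ≤ (ε ^ 2 + 3 * ε + 2) / ε * lam i := by
  obtain ⟨α, hα, x, hxi, hxj⟩ := hint
  rw [hb] at hxi hxj
  by_cases hi : α ≤ lam i * (1 + ε) ^ 2 / ε
  · rw [if_pos hi] at hxi
    by_cases hj : α ≤ lam j * (1 + ε) ^ 2 / ε
    · rw [if_pos hj] at hxj
      have h1 : dist (p i) (p j) ≤ r i α + r j α := by
        calc dist (p i) (p j) ≤ dist (p i) x + dist x (p j) := dist_triangle _ _ _
        _ ≤ r i α + r j α := by
            have := Metric.mem_closedBall.mp hxi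
            have := Metric.mem_closedBall.mp hxj
            rw [dist_comm (p i) x]
            linarith
      have h2 : r i α ≤ lam i * (1 + ε) / ε := by rw [hr]; exact min_le_right _ _
      have h3 : r j α ≤ α := by rw [hr]; exact min_le_left _ _
      have h4 : lam i * (1 + ε) / ε + lam i * (1 + ε) ^ 2 / ε
          = (ε ^ 2 + 3 * ε + 2) / ε * lam i := by ring
      linarith
    · rw [if_neg hj] at hxj; exact absurd hxj (Set.notMem_empty x)
  · rw [if_neg hi] at hxi; exact absurd hxi (Set.notMem_empty x)
end

section
/- Correctness of EdgeBirthTime: with λ_i ≤ λ_j, consider the balls b_i(α) and b_j(α) (for the ℓ_∞/Rips case, they intersect iff d(p_i,p_j) ≤ r_i(α)+r_j(α) and α ≤ λ_i(1+ε)²/ε); then the minimal α with r_i(α)+r_j(α) ≥ d(p_i,p_j) and α ≤ λ_i(1+ε)²/ε equals d(p_i,p_j)/2 if d(p_i,p_j) ≤ 2λ_i(1+ε)/ε, equals d(p_i,p_j) − λ_i(1+ε)/ε if 2λ_i(1+ε)/ε < d(p_i,p_j) ≤ (λ_i+λ_j)(1+ε)/ε and this value is ≤ λ_i(1+ε)²/ε,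 and does not exist if d(p_i,p_j) > (λ_i+λ_j)(1+ε)/ε. -/
/-- Correctness of EdgeBirthTime: with `λ_i ≤ λ_j`, the minimal `α ≥ 0` with
`r_i(α)+r_j(α) ≥ D` and `α ≤ λ_i(1+ε)²/ε` equals `D/2` if
`D ≤ 2λ_i(1+ε)/ε`, equals `D − λ_i(1+ε)/ε` if
`2λ_i(1+ε)/ε < D ≤ (λ_i+λ_j)(1+ε)/ε` and that value is `≤ λ_i(1+ε)²/ε`,
and does not exist if `D > (λ_i+λ_j)(1+ε)/ε`. -/
theorem edge_birth_time_correct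
    (ε lami lamj D : ℝ)
    (hε : 0 < ε) (hi : 0 < lami) (hij : lami ≤ lamj) (hD : 0 ≤ D)
    (ri rj : ℝ → ℝ)
    (hri : ∀ α, ri α = min α (lami * (1 + ε) / ε))
    (hrj : ∀ α, rj α = min α (lamj * (1 + ε) / ε))
    (S : Set ℝ)
    (hS : S = {α : ℝ | 0 ≤ α ∧ D ≤ ri α + rj α ∧
      α ≤ lami * (1 + ε) ^ 2 / ε}) :
    (D ≤ 2 * (lami * (1 + ε) / ε) → IsLeast S (D / 2)) ∧
    (2 * (lami * (1 + ε) / ε) < D → D ≤ (lami + lamj) * (1 + ε) / ε →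
      D - lami * (1 + ε) / ε ≤ lami * (1 + ε) ^ 2 / ε →
      IsLeast S (D - lami * (1 + ε) / ε)) ∧
    ((lami + lamj) * (1 + ε) / ε < D → S = ∅) := by
  set A := lami * (1 + ε) / ε with hA
  set B := lamj * (1 + ε) / ε with hB
  have hApos : 0 < A := by positivity
  have hBpos : 0 < B := by
    have : 0 < lamj := lt_of_lt_of_le hi hij
    positivity
  have hAB : A ≤ B := by
    rw [hA, hB, div_le_div_iff₀ hε hε]
    nlinarith [mul_nonneg (mul_nonneg (sub_nonneg.mpr hij) (by linarith : (0:ℝ) ≤ 1 + ε)) hε.le]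
  have hcap : A ≤ lami * (1 + ε) ^ 2 / ε := by
    rw [hA, div_le_div_iff₀ hε hε]
    nlinarith [mul_pos (mul_pos hi hε) hε, sq_nonneg ε, mul_pos hi hε]
  refine ⟨?_, ?_, ?_⟩
  · intro h1
    constructor
    · rw [hS]
      refine ⟨by linarith, ?_, ?_⟩
      · rw [hri, hrj]
        have h2 : D / 2 ≤ A := by linarith
        rw [min_eq_left h2, min_eq_left (le_trans h2 hAB)]
        linarith
      · linarith
    · intro α hα
      rw [hS] at hα
      obtain ⟨h0, h2, h3⟩ := hα
      rw [hri, hrj] at h2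
      have := min_le_left α A
      have := min_le_left α B
      linarith
  · intro h1 h2 h3
    constructor
    · rw [hS]
      refine ⟨by linarith, ?_, h3⟩
      rw [hri, hrj]
      have hDA : A ≤ D - A := by linarith
      have hDB : D - A ≤ B := by
        have : (lami + lamj) * (1 + ε) / ε = A + B := by rw [hA, hB]; ring
        linarith [this ▸ h2]
      rw [min_eq_right hDA, min_eq_left hDB]
      linarith
    · intro α hα
      rw [hS] at hα
      obtain ⟨h0, h4, h5⟩ := hα
      rw [hri, hrj] at h4
      have := min_le_right α A
      have := min_le_left α B
      linarith
  · intro h1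
    rw [hS]
    ext α
    simp only [Set.mem_setOf_eq, Set.mem_empty_iff_false, iff_false]
    rintro ⟨h0, h2, h3⟩
    rw [hri, hrj] at h2
    have hs : (lami + lamj) * (1 + ε) / ε = A + B := by rw [hA, hB]; ring
    have := min_le_right α A
    have := min_le_right α B
    linarith [hs ▸ h1]
end
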